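/- arXiv:2412.10659 — 2 statements merged into one kernel-verified Lean document; each statement's English description precedes it below -/
import Mathlib

section
/- Let X, Y, W be random variables on a probability space taking values in finite measurable spaces. Suppose W = g ∘ Y for some measurable function g, I[W : Y | X] > 0, and H[⟨X, Y⟩] > 0. Then augmenting X by W strictly increases the relative mutual information with Y: I[⟨X, W⟩ : Y] / H[⟨⟨X, W⟩, Y⟩] > I[X : Y] / H[⟨X, Y⟩]. (The strict inequality M̂(z₁, z₃, ž₃; y) > M̂(z₁, z₃; y) established in the proof of Proposition D.1.) -/
open MeasureTheory ProbabilityTheory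

/-- The pair of two random variables: `⟨X, Y⟩ : ω ↦ (X ω, Y ω)`. -/
def pairRV {Ω S T : Type*} (X : Ω → S) (Y : Ω → T) : Ω → S × T :=
  fun ω => (X ω, Y ω)

/-- Shannon entropy `H[X]` of a random variable `X` taking values in a finite
measurable space, under the measure `μ`. -/
noncomputable def shannonEntropy {Ω S : Type*} [MeasurableSpace Ω] [MeasurableSpace S]
    [Fintype S] (μ : Measure Ω) (X : Ω → S) : ℝ :=
  ∑ s : S, Real.negMulLog ((μ (X ⁻¹' {s})).toReal)

/-- Mutual information `I[X : Y] = H[X] + H[Y] - H[⟨X, Y⟩]`. -/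
noncomputable def mutualInfo {Ω S T : Type*} [MeasurableSpace Ω] [MeasurableSpace S]
    [Fintype S] [MeasurableSpace T] [Fintype T] (μ : Measure Ω) (X : Ω → S) (Y : Ω → T) : ℝ :=
  shannonEntropy μ X + shannonEntropy μ Y - shannonEntropy μ (pairRV X Y)

/-- Conditional mutual information
`I[X : Y | Z] = H[⟨X, Z⟩] + H[⟨Y, Z⟩] - H[⟨⟨X, Y⟩, Z⟩] - H[Z]`. -/
noncomputable def condMutualInfo {Ω S T U : Type*} [MeasurableSpace Ω] [MeasurableSpace S]
    [Fintype S] [MeasurableSpace T] [Fintype T] [MeasurableSpace U] [Fintype U]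
    (μ : Measure Ω) (X : Ω → S) (Y : Ω → T) (Z : Ω → U) : ℝ :=
  shannonEntropy μ (pairRV X Z) + shannonEntropy μ (pairRV Y Z)
    - shannonEntropy μ (pairRV (pairRV X Y) Z) - shannonEntropy μ Z

open Classical in
lemma entropy_comp_inj {Ω S T : Type*} [MeasurableSpace Ω] [MeasurableSpace S] [Fintype S]
    [MeasurableSpace T] [Fintype T] (μ : Measure Ω) (Z : Ω → S) (f : S → T)
    (hf : Function.Injective f) : shannonEntropy μ (f ∘ Z) = shannonEntropy μ Z := by
  unfold shannonEntropy
  have h0 : ∀ t : T, t ∉ Finset.univ.image f →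
      Real.negMulLog ((μ ((f ∘ Z) ⁻¹' {t})).toReal) = 0 := by
    intro t ht
    have : (f ∘ Z) ⁻¹' {t} = ∅ := by
      ext ω; simp only [Set.mem_preimage, Set.mem_singleton_iff, Set.mem_empty_iff_false,
        iff_false, Function.comp]
      intro h; exact ht (Finset.mem_image.2 ⟨Z ω, Finset.mem_univ _, h⟩)
    simp [this]
  rw [← Finset.sum_subset (Finset.subset_univ (Finset.univ.image f)) (fun t _ ht => h0 t ht),
    Finset.sum_image (fun a _ b _ h => hf h)]
  refine Finset.sum_congr rfl fun s _ => ?_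
  congr 1
  have : (f ∘ Z) ⁻¹' {f s} = Z ⁻¹' {s} := by
    ext ω; simp [Function.comp, hf.eq_iff]
  rw [this]

/-- If `W = g ∘ Y`, `I[W : Y | X] > 0` and `H[⟨X, Y⟩] > 0`, then augmenting `X`
by `W` strictly increases the relative mutual information with `Y`:
`I[⟨X, W⟩ : Y] / H[⟨⟨X, W⟩, Y⟩] > I[X : Y] / H[⟨X, Y⟩]`. -/
theorem relMutualInfo_lt_of_comp {Ω S T V : Type*} [MeasurableSpace Ω]
    [MeasurableSpace S] [Fintype S] [MeasurableSingletonClass S]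
    [MeasurableSpace T] [Fintype T] [MeasurableSingletonClass T]
    [MeasurableSpace V] [Fintype V] [MeasurableSingletonClass V]
    (μ : Measure Ω) [IsProbabilityMeasure μ]
    (X : Ω → S) (Y : Ω → T) (W : Ω → V) (g : T → V)
    (hX : Measurable X) (hY : Measurable Y) (hW : Measurable W) (hg : Measurable g)
    (hcomp : W = g ∘ Y)
    (hpos : 0 < condMutualInfo μ W Y X)
    (hent : 0 < shannonEntropy μ (pairRV X Y)) :
    mutualInfo μ X Y / shannonEntropy μ (pairRV X Y)
      < mutualInfo μ (pairRV X W) Y / shannonEntropy μ (pairRV (pairRV X W) Y) := by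
  set P := pairRV X Y with hP
  -- denominator equality
  have hden : shannonEntropy μ (pairRV (pairRV X W) Y) = shannonEntropy μ P := by
    have h1 : pairRV (pairRV X W) Y = (fun p : S × T => ((p.1, g p.2), p.2)) ∘ P := by
      funext ω; simp [hP, pairRV, hcomp, Function.comp]
    rw [h1]
    exact entropy_comp_inj μ P _ (fun a b h => by
      simpa [Prod.ext_iff] using And.intro (congrArg (fun q => q.1.1) h) (congrArg Prod.snd h))
  have hWX : shannonEntropy μ (pairRV W X) = shannonEntropy μ (pairRV X W) := by
    have : pairRV W X = (fun p : S × V => (p.2, p.1)) ∘ pairRV X W := rfl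
    rw [this]
    exact entropy_comp_inj μ _ _ (fun a b h => by
      simpa [Prod.ext_iff, and_comm] using h)
  have hYX : shannonEntropy μ (pairRV Y X) = shannonEntropy μ P := by
    have : pairRV Y X = (fun p : S × T => (p.2, p.1)) ∘ P := rfl
    rw [this]
    exact entropy_comp_inj μ _ _ (fun a b h => by
      simpa [Prod.ext_iff, and_comm] using h)
  have hWYX : shannonEntropy μ (pairRV (pairRV W Y) X) = shannonEntropy μ P := by
    have h1 : pairRV (pairRV W Y) X = (fun p : S × T => ((g p.2, p.2), p.1)) ∘ P := by
      funext ω; simp [hP, pairRV, hcomp, Function.comp]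
    rw [h1]
    exact entropy_comp_inj μ P _ (fun a b h => by
      simpa [Prod.ext_iff] using And.intro (congrArg Prod.snd h) (congrArg (fun q => q.1.2) h))
  -- chain rule: I[XW:Y] = I[X:Y] + I[W:Y|X]
  have hchain : mutualInfo μ (pairRV X W) Y = mutualInfo μ X Y + condMutualInfo μ W Y X := by
    unfold mutualInfo condMutualInfo
    rw [hden, hWX, hYX, ← hP]
    have : shannonEntropy μ (pairRV (pairRV W Y) X) = shannonEntropy μ P := hWYX
    rw [this]
    ring
  rw [hden, hchain]
  exact (div_lt_div_iff_of_pos_right hent).2 (by linarith)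
end

section
/- Let Z, V, W be random variables on a probability space taking values in finite measurable spaces. Suppose W is independent of the pair ⟨Z, V⟩, H[W] > 0, and I[Z : V] > 0. Then augmenting Z by W strictly decreases the relative mutual information with V: I[⟨Z, W⟩ : V] / H[⟨⟨Z, W⟩, V⟩] < I[Z : V] / H[⟨Z, V⟩]. (The strict inequality M̂(z₃, ž₃; v₁) < M̂(z₃; v₁) established in the proof of Proposition D.1, where ž₃ carries no information about v₁ or z₃.) -/
open MeasureTheory ProbabilityTheory

/-- Entropy is invariant under composition with an injective map. -/
lemma shannonEntropy_comp_injective {Ω S T : Type*} [MeasurableSpace Ω] [MeasurableSpace S]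
    [Fintype S] [MeasurableSpace T] [Fintype T]
    (μ : Measure Ω) (X : Ω → S) (f : S → T) (hf : Function.Injective f) :
    shannonEntropy μ (f ∘ X) = shannonEntropy μ X := by
  classical
  unfold shannonEntropy
  have h1 : ∀ s : S, (f ∘ X) ⁻¹' {f s} = X ⁻¹' {s} := by
    intro s
    ext ω
    simp [hf.eq_iff]
  calc ∑ t : T, Real.negMulLog ((μ ((f ∘ X) ⁻¹' {t})).toReal)
      = ∑ t ∈ Finset.univ.image f, Real.negMulLog ((μ ((f ∘ X) ⁻¹' {t})).toReal) := by
        refine (Finset.sum_subset (Finset.subset_univ _) ?_).symm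
        intro t _ ht
        have : (f ∘ X) ⁻¹' {t} = ∅ := by
          ext ω
          simp only [Set.mem_preimage, Function.comp_apply, Set.mem_singleton_iff,
            Set.mem_empty_iff_false, iff_false]
          intro h
          exact ht (Finset.mem_image.2 ⟨X ω, Finset.mem_univ _, h⟩)
        simp [this]
    _ = ∑ s : S, Real.negMulLog ((μ ((f ∘ X) ⁻¹' {f s})).toReal) :=
        Finset.sum_image (fun x _ y _ h => hf h)
    _ = ∑ s : S, Real.negMulLog ((μ (X ⁻¹' {s})).toReal) :=
        Finset.sum_congr rfl fun s _ => by rw [h1]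

lemma sum_toReal_measure_preimage_singleton {Ω S : Type*} [MeasurableSpace Ω]
    [MeasurableSpace S] [Fintype S] [MeasurableSingletonClass S]
    (μ : Measure Ω) [IsProbabilityMeasure μ] (X : Ω → S) (hX : Measurable X) :
    ∑ s : S, (μ (X ⁻¹' {s})).toReal = 1 := by
  rw [← ENNReal.toReal_sum (fun s _ => measure_ne_top μ _)]
  rw [sum_measure_preimage_singleton _ (fun y _ => hX (measurableSet_singleton y))]
  simp

/-- Entropy of an independent pair is the sum of entropies. -/
lemma shannonEntropy_pair_of_indep {Ω S T : Type*} [MeasurableSpace Ω]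
    [MeasurableSpace S] [Fintype S] [MeasurableSingletonClass S]
    [MeasurableSpace T] [Fintype T] [MeasurableSingletonClass T]
    (μ : Measure Ω) [IsProbabilityMeasure μ] (X : Ω → S) (Y : Ω → T)
    (hX : Measurable X) (hY : Measurable Y) (h : IndepFun X Y μ) :
    shannonEntropy μ (pairRV X Y) = shannonEntropy μ X + shannonEntropy μ Y := by
  unfold shannonEntropy
  rw [Fintype.sum_prod_type]
  have key : ∀ (s : S) (t : T),
      (μ (pairRV X Y ⁻¹' {(s, t)})).toReal
        = (μ (X ⁻¹' {s})).toReal * (μ (Y ⁻¹' {t})).toReal := by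
    intro s t
    have hpre : pairRV X Y ⁻¹' {(s, t)} = X ⁻¹' {s} ∩ Y ⁻¹' {t} := by
      ext ω; simp [pairRV, Prod.ext_iff]
    rw [hpre, h.measure_inter_preimage_eq_mul _ _ (measurableSet_singleton s)
      (measurableSet_singleton t), ENNReal.toReal_mul]
  calc ∑ s : S, ∑ t : T, Real.negMulLog ((μ (pairRV X Y ⁻¹' {(s, t)})).toReal)
      = ∑ s : S, ∑ t : T, ((μ (Y ⁻¹' {t})).toReal * Real.negMulLog ((μ (X ⁻¹' {s})).toReal)
          + (μ (X ⁻¹' {s})).toReal * Real.negMulLog ((μ (Y ⁻¹' {t})).toReal)) := by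
        refine Finset.sum_congr rfl fun s _ => Finset.sum_congr rfl fun t _ => ?_
        rw [key s t, Real.negMulLog_mul]
    _ = (∑ t : T, (μ (Y ⁻¹' {t})).toReal) * (∑ s : S, Real.negMulLog ((μ (X ⁻¹' {s})).toReal))
          + (∑ s : S, (μ (X ⁻¹' {s})).toReal) *
              (∑ t : T, Real.negMulLog ((μ (Y ⁻¹' {t})).toReal)) := by
        simp only [Finset.sum_add_distrib]
        congr 1
        · rw [Finset.sum_comm]
          simp only [← Finset.mul_sum]
          rw [← Finset.sum_mul]
        · simp only [← Finset.mul_sum]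
          rw [← Finset.sum_mul]
    _ = shannonEntropy μ X + shannonEntropy μ Y := by
        rw [sum_toReal_measure_preimage_singleton μ X hX,
          sum_toReal_measure_preimage_singleton μ Y hY]
        simp [shannonEntropy]

lemma negMulLog_sum_le {ι : Type*} (s : Finset ι) (x : ι → ℝ) (hx : ∀ i ∈ s, 0 ≤ x i) :
    Real.negMulLog (∑ i ∈ s, x i) ≤ ∑ i ∈ s, Real.negMulLog (x i) := by
  have hsum : Real.negMulLog (∑ i ∈ s, x i)
      = ∑ i ∈ s, (-(x i) * Real.log (∑ j ∈ s, x j)) := by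
    simp only [neg_mul, Finset.sum_neg_distrib, ← Finset.sum_mul, Real.negMulLog]
  rw [hsum]
  refine Finset.sum_le_sum fun i hi => ?_
  rcases eq_or_lt_of_le (hx i hi) with h0 | h0
  · simp [Real.negMulLog, ← h0]
  · have hle : x i ≤ ∑ j ∈ s, x j := Finset.single_le_sum hx hi
    have : Real.log (x i) ≤ Real.log (∑ j ∈ s, x j) := Real.log_le_log h0 hle
    rw [Real.negMulLog]
    nlinarith [this, h0]

/-- Entropy of the first component is at most the entropy of the pair. -/
lemma shannonEntropy_le_pair_left {Ω S T : Type*} [MeasurableSpace Ω]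
    [MeasurableSpace S] [Fintype S] [MeasurableSingletonClass S]
    [MeasurableSpace T] [Fintype T] [MeasurableSingletonClass T]
    (μ : Measure Ω) [IsFiniteMeasure μ] (X : Ω → S) (Y : Ω → T)
    (hX : Measurable X) (hY : Measurable Y) :
    shannonEntropy μ X ≤ shannonEntropy μ (pairRV X Y) := by
  unfold shannonEntropy
  rw [Fintype.sum_prod_type]
  refine Finset.sum_le_sum fun s _ => ?_
  have hdecomp : (μ (X ⁻¹' {s})).toReal = ∑ t : T, (μ (pairRV X Y ⁻¹' {(s, t)})).toReal := by
    have h1 : ∀ t : T, pairRV X Y ⁻¹' {(s, t)} = X ⁻¹' {s} ∩ Y ⁻¹' {t} := by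
      intro t; ext ω; simp [pairRV, Prod.ext_iff]
    have h2 : X ⁻¹' {s} = ⋃ t : T, (X ⁻¹' {s} ∩ Y ⁻¹' {t}) := by
      ext ω
      simp only [Set.mem_iUnion, Set.mem_inter_iff, Set.mem_preimage, Set.mem_singleton_iff]
      exact ⟨fun h => ⟨Y ω, h, rfl⟩, fun ⟨t, h, _⟩ => h⟩
    rw [← ENNReal.toReal_sum (fun t _ => ?_)]
    · congr 1
      rw [h2, measure_iUnion, tsum_fintype]
      · exact Finset.sum_congr rfl fun t _ => by rw [h1]
      · intro t t' htt'
        simp only [Function.onFun, Set.disjoint_left, Set.mem_inter_iff, Set.mem_preimage,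
          Set.mem_singleton_iff]
        rintro ω ⟨-, h⟩ ⟨-, h'⟩
        exact htt' (h.symm.trans h')
      · exact fun t => (hX (measurableSet_singleton s)).inter (hY (measurableSet_singleton t))
    · exact measure_ne_top _ _
  rw [hdecomp]
  exact negMulLog_sum_le _ _ fun t _ => ENNReal.toReal_nonneg

/-- If `W` is independent of `⟨Z, V⟩`, `H[W] > 0` and `I[Z : V] > 0`, then
augmenting `Z` by `W` strictly decreases the relative mutual information with `V`:
`I[⟨Z, W⟩ : V] / H[⟨⟨Z, W⟩, V⟩] < I[Z : V] / H[⟨Z, V⟩]`. -/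
theorem relMutualInfo_lt_of_indep {Ω S T V : Type*} [MeasurableSpace Ω]
    [MeasurableSpace S] [Fintype S] [MeasurableSingletonClass S]
    [MeasurableSpace T] [Fintype T] [MeasurableSingletonClass T]
    [MeasurableSpace V] [Fintype V] [MeasurableSingletonClass V]
    (μ : Measure Ω) [IsProbabilityMeasure μ]
    (Z : Ω → S) (V' : Ω → T) (W : Ω → V)
    (hZ : Measurable Z) (hV : Measurable V') (hW : Measurable W)
    (hindep : IndepFun W (pairRV Z V') μ)
    (hent : 0 < shannonEntropy μ W)
    (hmi : 0 < mutualInfo μ Z V') :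
    mutualInfo μ (pairRV Z W) V' / shannonEntropy μ (pairRV (pairRV Z W) V')
      < mutualInfo μ Z V' / shannonEntropy μ (pairRV Z V') := by
  have hZV : Measurable (pairRV Z V') := hZ.prodMk hV
  -- H[⟨⟨Z,W⟩,V'⟩] = H[W] + H[⟨Z,V'⟩]
  have e1 : shannonEntropy μ (pairRV (pairRV Z W) V')
      = shannonEntropy μ W + shannonEntropy μ (pairRV Z V') := by
    have hf : Function.Injective (fun p : V × (S × T) => ((p.2.1, p.1), p.2.2)) := by
      rintro ⟨w, z, v⟩ ⟨w', z', v'⟩ h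
      simp_all [Prod.ext_iff]
    have hcomp : pairRV (pairRV Z W) V'
        = (fun p : V × (S × T) => ((p.2.1, p.1), p.2.2)) ∘ pairRV W (pairRV Z V') := rfl
    rw [hcomp, shannonEntropy_comp_injective μ _ _ hf,
      shannonEntropy_pair_of_indep μ W (pairRV Z V') hW hZV hindep]
  -- H[⟨Z,W⟩] = H[W] + H[Z]
  have hWZ : IndepFun W Z μ := hindep.comp measurable_id measurable_fst
  have e2 : shannonEntropy μ (pairRV Z W) = shannonEntropy μ W + shannonEntropy μ Z := by
    have hf : Function.Injective (fun p : V × S => (p.2, p.1)) := by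
      rintro ⟨w, z⟩ ⟨w', z'⟩ h
      simp_all [Prod.ext_iff]
    have hcomp : pairRV Z W = (fun p : V × S => (p.2, p.1)) ∘ pairRV W Z := rfl
    rw [hcomp, shannonEntropy_comp_injective μ _ _ hf,
      shannonEntropy_pair_of_indep μ W Z hW hZ hWZ]
  -- I[⟨Z,W⟩ : V'] = I[Z : V']
  have e3 : mutualInfo μ (pairRV Z W) V' = mutualInfo μ Z V' := by
    unfold mutualInfo
    rw [e1, e2]
    ring
  -- H[⟨Z,V'⟩] > 0
  have hb : 0 < shannonEntropy μ (pairRV Z V') := by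
    have h1 : shannonEntropy μ Z ≤ shannonEntropy μ (pairRV Z V') :=
      shannonEntropy_le_pair_left μ Z V' hZ hV
    have h2 : shannonEntropy μ V' ≤ shannonEntropy μ (pairRV Z V') := by
      have hf : Function.Injective (fun p : T × S => (p.2, p.1)) := by
        rintro ⟨v, z⟩ ⟨v', z'⟩ h
        simp_all [Prod.ext_iff]
      have hcomp : pairRV Z V' = (fun p : T × S => (p.2, p.1)) ∘ pairRV V' Z := rfl
      calc shannonEntropy μ V' ≤ shannonEntropy μ (pairRV V' Z) :=
            shannonEntropy_le_pair_left μ V' Z hV hZ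
        _ = shannonEntropy μ (pairRV Z V') := by
            rw [hcomp, shannonEntropy_comp_injective μ _ _ hf]
    have := hmi
    unfold mutualInfo at this
    linarith
  rw [e1, e3]
  exact div_lt_div_of_pos_left hmi hb (by linarith)
end
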